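/- Let $V$ be an $n$-dimensional real inner product space, $n \ge 3$, and let $E$ be a nonzero symmetric trace-free bilinear form on $V$ with $R > 0$ such that the conformally flat curvature quadratic form attains equality: $-\mathrm{Rm}_{ikjl}E_{ij}E_{kl} + \mathrm{Ric}_{jk}E_{ij}E_{ik} = \frac{1}{n-1}|E|^2(R - \sqrt{n(n-1)}|E|)$, where $\mathrm{Rm}_{ikjl} = \frac{1}{n-2}(E_{ij}g_{kl} - E_{il}g_{jk} + E_{kl}g_{ij} - E_{jk}g_{il}) + \frac{R}{n(n-1)}(g_{ij}g_{kl} - g_{il}g_{jk})$ and $\mathrm{Ric} = E + \frac{R}{n} g$. Then $E$ has an eigenvalue of multiplicity $n-1$ and another eigenvalue of multiplicity $1$. -/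

import Mathlib

/-!
With `g = δ` the curvature form contracts to `n/(n-2) tr E³ + R/(n-1) |E|²`, so equality means
`tr E³ = -(n-2)/√(n(n-1)) |E|³`. In terms of the eigenvalues `λᵢ` of `E` and
`μ = |E|/√(n(n-1))` this reads `∑ λᵢ = 0`, `∑ λᵢ² = n(n-1)μ²`, `∑ λᵢ³ = -n(n-1)(n-2)μ³`.
The first two force `λᵢ ≥ -(n-1)μ` (Cauchy–Schwarz on the other `n-1` eigenvalues), and the three
together give `∑ (λᵢ - μ)² (λᵢ + (n-1)μ) = 0`. Hence every `λᵢ` is `μ` or `-(n-1)μ`, and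
`∑ λᵢ = 0` leaves exactly one eigenvalue equal to `-(n-1)μ`.
-/

open Finset Module Matrix

namespace Matrix

variable {ι R : Type*} [Fintype ι] [DecidableEq ι] [CommRing R]

lemma trace_pow_two_eq_sum (E : Matrix ι ι R) : (E ^ 2).trace = ∑ i, ∑ j, E i j * E j i := by
  simp [sq, trace, mul_apply]

lemma trace_pow_three_eq_sum (E : Matrix ι ι R) :
    (E ^ 3).trace = ∑ i, ∑ j, ∑ k, E i j * E j k * E k i := by
  simp only [pow_succ, pow_zero, one_mul, trace, diag_apply, mul_apply, sum_mul]
  exact sum_congr rfl fun i _ ↦ sum_comm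

lemma IsSymm.trace_pow_two_eq_sum_sq {E : Matrix ι ι R} (hE : E.IsSymm) :
    (E ^ 2).trace = ∑ i, ∑ j, E i j ^ 2 := by
  rw [trace_pow_two_eq_sum]
  exact sum_congr rfl fun i _ ↦ sum_congr rfl fun j _ ↦ by rw [hE.apply i j, sq]

end Matrix

namespace Matrix.IsHermitian

variable {𝕜 ι : Type*} [RCLike 𝕜] [Fintype ι] [DecidableEq ι] {A : Matrix ι ι 𝕜}

lemma trace_pow_eq_sum_eigenvalues_pow (hA : A.IsHermitian) (k : ℕ) :
    (A ^ k).trace = ∑ i, (hA.eigenvalues i : 𝕜) ^ k := by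
  conv_lhs => rw [hA.spectral_theorem, ← map_pow, Unitary.conjStarAlgAut_apply, trace_mul_cycle,
    Unitary.coe_star_mul_self, one_mul, diagonal_pow, trace_diagonal]
  rfl

lemma eigenspace_toEuclideanLin (A : Matrix ι ι 𝕜) (μ : 𝕜) :
    End.eigenspace (toEuclideanLin A) μ =
      (End.eigenspace (toLin' A) μ).comap (WithLp.linearEquiv 2 𝕜 (ι → 𝕜)).toLinearMap := by
  ext x
  simp only [Submodule.mem_comap, End.mem_eigenspace_iff]
  constructor <;> intro h
  · simpa using congrArg WithLp.ofLp h
  · exact congrArg (WithLp.toLp 2) h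

lemma card_filter_eigenvalues_eq (hA : A.IsHermitian) (μ : ℝ) :
    #{i | hA.eigenvalues i = μ} = finrank 𝕜 (End.eigenspace (toLin' A) (μ : 𝕜)) := by
  rw [← LinearEquiv.finrank_map_eq (WithLp.linearEquiv 2 𝕜 (ι → 𝕜)).symm,
    ← Submodule.comap_equiv_eq_map_symm, ← eigenspace_toEuclideanLin,
    ← (isSymmetric_toEuclideanLin_iff.mpr hA).card_filter_eigenvalues_eq finrank_euclideanSpace]
  refine card_equiv (Fintype.equivOfCardEq (Fintype.card_fin _)).symm fun i ↦ ?_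
  simp only [mem_filter, mem_univ, true_and, RCLike.ofReal_inj]
  rfl

end Matrix.IsHermitian

section Contraction

variable {ι R : Type*} [Fintype ι] [DecidableEq ι] [CommRing R]

lemma sum_riemann_contraction (E : Matrix ι ι R) (hE : E.IsSymm) (a b : R)
    (g : ι → ι → R) (hg : ∀ i j, g i j = if i = j then 1 else 0)
    (Rm : ι → ι → ι → ι → R)
    (hRm : ∀ i k j l, Rm i k j l =
      a * (E i j * g k l - E i l * g j k + E k l * g i j - E j k * g i l) +
        b * (g i j * g k l - g i l * g j k)) :
    ∑ i, ∑ k, ∑ j, ∑ l, Rm i k j l * E i j * E k l =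
      2 * a * (E.trace * (E ^ 2).trace - (E ^ 3).trace) + b * (E.trace ^ 2 - (E ^ 2).trace) := by
  have hsym : ∀ i j, E j i = E i j := fun i j ↦ hE.apply i j
  simp only [hRm, hg, mul_ite, ite_mul, mul_one, mul_zero, zero_mul, sub_mul, add_mul, mul_sub,
    mul_add, sum_add_distrib, sum_sub_distrib, sum_ite_irrel, sum_const_zero, sum_ite_eq,
    sum_ite_eq', mem_univ, if_true]
  rw [trace_pow_two_eq_sum, trace_pow_three_eq_sum]
  simp only [trace, diag_apply]
  have t1 : ∑ x, ∑ y, ∑ z, a * E x z * E x z * E y y =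
      a * ((∑ i, E i i) * ∑ i, ∑ j, E i j * E j i) := by
    rw [sum_mul_sum, sum_comm]; simp_rw [mul_sum]
    refine sum_congr rfl fun y _ ↦ sum_congr rfl fun x _ ↦ sum_congr rfl fun z _ ↦ ?_
    rw [hsym z x]; ring
  have t2 : ∑ x, ∑ y, ∑ z, a * E x z * E x y * E y z =
      a * ∑ i, ∑ j, ∑ k, E i j * E j k * E k i := by
    simp_rw [mul_sum]
    refine sum_congr rfl fun x _ ↦ sum_congr rfl fun y _ ↦ sum_congr rfl fun z _ ↦ ?_
    rw [hsym z x]; ring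
  have t3 : ∑ x, ∑ y, ∑ z, a * E y z * E x x * E y z =
      a * ((∑ i, E i i) * ∑ i, ∑ j, E i j * E j i) := by
    rw [sum_mul_sum]; simp_rw [mul_sum]
    refine sum_congr rfl fun x _ ↦ sum_congr rfl fun y _ ↦ sum_congr rfl fun z _ ↦ ?_
    rw [hsym z y]; ring
  have t4 : ∑ x, ∑ y, ∑ z, a * E z y * E x z * E y x =
      a * ∑ i, ∑ j, ∑ k, E i j * E j k * E k i := by
    simp_rw [mul_sum]
    refine sum_congr rfl fun x _ ↦ ?_
    rw [sum_comm]
    exact sum_congr rfl fun z _ ↦ sum_congr rfl fun y _ ↦ by ring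
  have t5 : ∑ x, ∑ y, b * E x x * E y y = b * (∑ i, E i i) ^ 2 := by
    rw [sq, sum_mul_sum]; simp_rw [mul_sum, mul_assoc]
  have t6 : ∑ x, ∑ y, b * E x y * E y x = b * ∑ i, ∑ j, E i j * E j i := by
    simp_rw [mul_sum, mul_assoc]
  rw [t1, t2, t3, t4, t5, t6]
  ring

lemma sum_ricci_contraction (E : Matrix ι ι R) (hE : E.IsSymm) (c : R)
    (g : ι → ι → R) (hg : ∀ i j, g i j = if i = j then 1 else 0)
    (Ric : ι → ι → R) (hRic : ∀ j k, Ric j k = E j k + c * g j k) :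
    ∑ i, ∑ j, ∑ k, Ric j k * E i j * E i k = (E ^ 3).trace + c * (E ^ 2).trace := by
  have hsym : ∀ i j, E j i = E i j := fun i j ↦ hE.apply i j
  simp only [hRic, hg, mul_ite, ite_mul, mul_one, mul_zero, zero_mul, add_mul, sum_add_distrib,
    sum_ite_eq, mem_univ, if_true, trace_pow_two_eq_sum, trace_pow_three_eq_sum, mul_sum]
  congr 1
  · exact sum_congr rfl fun i _ ↦ sum_congr rfl fun j _ ↦ sum_congr rfl fun k _ ↦ by
      rw [hsym i k]; ring
  · exact sum_congr rfl fun i _ ↦ sum_congr rfl fun j _ ↦ by rw [hsym i j]; ring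

end Contraction

section CubicEquality

variable {ι : Type*} [Fintype ι]

lemma card_mul_sq_le_of_sum_eq_zero {l : ι → ℝ} (h : ∑ i, l i = 0) (i : ι) :
    Fintype.card ι * l i ^ 2 ≤ (Fintype.card ι - 1) * ∑ j, l j ^ 2 := by
  classical
  have hrest : ∑ j ∈ univ.erase i, l j = -l i := by
    rw [← add_sum_erase univ l (mem_univ i)] at h; linarith
  have hsq : ∑ j ∈ univ.erase i, l j ^ 2 = ∑ j, l j ^ 2 - l i ^ 2 := by
    rw [← add_sum_erase univ (fun j ↦ l j ^ 2) (mem_univ i)]; ring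
  have hcard : ((univ.erase i).card : ℝ) = Fintype.card ι - 1 := by
    rw [card_erase_of_mem (mem_univ i), card_univ, Nat.cast_pred (Fintype.card_pos_iff.mpr ⟨i⟩)]
  have hcs := sq_sum_le_card_mul_sum_sq (s := univ.erase i) (f := l)
  rw [hrest, neg_sq, hcard, hsq] at hcs
  linarith

lemma neg_le_of_sum_sq_eq {l : ι → ℝ} {μ : ℝ} (hμ : 0 ≤ μ) (h1 : ∑ i, l i = 0)
    (h2 : ∑ i, l i ^ 2 = Fintype.card ι * (Fintype.card ι - 1) * μ ^ 2) (i : ι) :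
    -((Fintype.card ι - 1) * μ) ≤ l i := by
  have hN : (1 : ℝ) ≤ Fintype.card ι := by
    exact_mod_cast Fintype.card_pos_iff.mpr ⟨i⟩
  have hsq : l i ^ 2 ≤ ((Fintype.card ι - 1) * μ) ^ 2 := by
    have := card_mul_sq_le_of_sum_eq_zero h1 i
    rw [h2] at this
    nlinarith
  exact neg_le_of_abs_le (abs_le_of_sq_le_sq hsq (by nlinarith))

lemma eq_or_eq_of_sum_pow_three_eq {l : ι → ℝ} {μ : ℝ} (hμ : 0 ≤ μ) (h1 : ∑ i, l i = 0)
    (h2 : ∑ i, l i ^ 2 = Fintype.card ι * (Fintype.card ι - 1) * μ ^ 2)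
    (h3 : ∑ i, l i ^ 3 = -(Fintype.card ι * (Fintype.card ι - 1) * (Fintype.card ι - 2) * μ ^ 3))
    (i : ι) : l i = μ ∨ l i = -((Fintype.card ι - 1) * μ) := by
  set N : ℝ := (Fintype.card ι : ℝ)
  have hzero : ∑ j, (l j - μ) ^ 2 * (l j + (N - 1) * μ) = 0 := by
    have hexpand : ∀ j, (l j - μ) ^ 2 * (l j + (N - 1) * μ) =
        l j ^ 3 + (N - 3) * μ * l j ^ 2 - (2 * N - 3) * μ ^ 2 * l j + (N - 1) * μ ^ 3 := by
      intro j; ring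
    simp only [hexpand, sum_add_distrib, sum_sub_distrib, ← mul_sum, sum_const, card_univ,
      nsmul_eq_mul, h1, h2, h3]
    ring
  have hterm := (sum_eq_zero_iff_of_nonneg fun j _ ↦ mul_nonneg (sq_nonneg (l j - μ))
    (neg_le_iff_add_nonneg.mp (neg_le_of_sum_sq_eq hμ h1 h2 j))).mp hzero i (mem_univ i)
  rcases mul_eq_zero.mp hterm with h | h
  · exact Or.inl (sub_eq_zero.mp (pow_eq_zero_iff two_ne_zero |>.mp h))
  · exact Or.inr (eq_neg_of_add_eq_zero_left h)

lemma card_filter_eq_of_forall_eq_or_eq [Nonempty ι] {l : ι → ℝ} {μ : ℝ} (hμ : μ ≠ 0)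
    (h1 : ∑ i, l i = 0) (h : ∀ i, l i = μ ∨ l i = -((Fintype.card ι - 1) * μ)) :
    #{i | l i = μ} = Fintype.card ι - 1 ∧ #{i | l i = -((Fintype.card ι - 1) * μ)} = 1 := by
  set N : ℝ := (Fintype.card ι : ℝ)
  set ν := -((N - 1) * μ)
  have hN : N ≠ 0 := Nat.cast_ne_zero.mpr Fintype.card_ne_zero
  have hμν : μ ≠ ν := fun e ↦ mul_ne_zero hN hμ (by linear_combination e)
  have hl : ∀ i, l i = μ - N * μ * (if l i = ν then 1 else 0) := fun i ↦ by
    rcases h i with e | e <;> simp only [e, hμν, if_false, if_true] <;> ring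
  have hB : #{i | l i = ν} = 1 := by
    rw [Fintype.sum_congr _ _ hl, sum_sub_distrib, ← mul_sum, sum_boole, sum_const,
      card_univ, nsmul_eq_mul] at h1
    exact_mod_cast mul_left_cancel₀ (mul_ne_zero hN hμ) (by linear_combination -h1 :
      N * μ * (#{i | l i = ν} : ℝ) = N * μ * 1)
  refine ⟨?_, hB⟩
  have hA : univ.filter (fun i ↦ l i = μ) = univ.filter fun i ↦ ¬ l i = ν :=
    filter_congr fun i _ ↦ ⟨fun e ↦ e ▸ hμν, fun e ↦ (h i).resolve_right e⟩
  have hsplit := card_filter_add_card_filter_not (s := univ) (fun i ↦ l i = ν)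
  rw [hB, card_univ] at hsplit
  rw [hA]; omega

lemma exists_card_filter_eq_of_sum_pow_three_eq (hN : 2 ≤ Fintype.card ι) {l : ι → ℝ}
    (h1 : ∑ i, l i = 0) (h2 : 0 < ∑ i, l i ^ 2)
    (h3 : ∑ i, l i ^ 3 = -((Fintype.card ι - 2) / √(Fintype.card ι * (Fintype.card ι - 1))) *
      (∑ i, l i ^ 2) * √(∑ i, l i ^ 2)) :
    ∃ μ ν : ℝ, μ ≠ ν ∧ #{i | l i = μ} = Fintype.card ι - 1 ∧ #{i | l i = ν} = 1 := by
  have : Nonempty ι := Fintype.card_pos_iff.mp (by omega)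
  have hN2 : (2 : ℝ) ≤ Fintype.card ι := by exact_mod_cast hN
  set N : ℝ := (Fintype.card ι : ℝ)
  set S := ∑ i, l i ^ 2
  have hD : 0 < N * (N - 1) := by nlinarith
  have hN1 : N - 1 ≠ 0 := by linarith
  set μ := √S / √(N * (N - 1))
  have hμ : 0 < μ := div_pos (Real.sqrt_pos.mpr h2) (Real.sqrt_pos.mpr hD)
  have hsq : S = N * (N - 1) * μ ^ 2 := by
    rw [div_pow, Real.sq_sqrt h2.le, Real.sq_sqrt hD.le]; field_simp
  have hcube : ∑ i, l i ^ 3 = -(N * (N - 1) * (N - 2) * μ ^ 3) := by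
    have hsS : √S = √(N * (N - 1)) * μ := by
      simp only [μ]; field_simp
    rw [h3, hsS, hsq]
    field_simp
  obtain ⟨hA, hB⟩ := card_filter_eq_of_forall_eq_or_eq hμ.ne' h1
    (eq_or_eq_of_sum_pow_three_eq hμ.le h1 hsq hcube)
  exact ⟨μ, _, fun e ↦ by nlinarith, hA, hB⟩

end CubicEquality

lemma cube_term_eq_of_equality_case {n R S T : ℝ} (hn : 3 ≤ n)
    (h : 2 / (n - 2) * T + R / (n * (n - 1)) * S + T + R / n * S =
      R / (n - 1) * S - √(n * (n - 1)) / (n - 1) * S * √S) :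
    T = -((n - 2) / √(n * (n - 1))) * S * √S := by
  have hD : 0 < n * (n - 1) := by nlinarith
  have hd := Real.sq_sqrt hD.le
  have h2 : n - 2 ≠ 0 := by linarith
  have h1 : n - 1 ≠ 0 := by linarith
  have h0 : n ≠ 0 := by linarith
  field_simp at h ⊢
  refine mul_left_cancel₀ (mul_ne_zero (pow_ne_zero 2 h0) h1) ?_
  linear_combination √(n * (n - 1)) * h - n * (n - 2) * S * √S * hd

theorem equality_case_eigenvalue_structure_general (n : ℕ) (hn : 3 ≤ n) (R : ℝ)
    (E : Matrix (Fin n) (Fin n) ℝ) (hsymm : E.IsSymm) (htr : ∑ i, E i i = 0) (hne : E ≠ 0)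
    (g : Fin n → Fin n → ℝ) (hg : ∀ i j, g i j = if i = j then 1 else 0)
    (Rm : Fin n → Fin n → Fin n → Fin n → ℝ)
    (hRm : ∀ i k j l, Rm i k j l =
        (1 / ((n : ℝ) - 2)) *
          (E i j * g k l - E i l * g j k + E k l * g i j - E j k * g i l) +
        (R / ((n : ℝ) * ((n : ℝ) - 1))) * (g i j * g k l - g i l * g j k))
    (Ric : Fin n → Fin n → ℝ)
    (hRic : ∀ j k, Ric j k = E j k + (R / (n : ℝ)) * g j k)
    (heq : -(∑ i, ∑ k, ∑ j, ∑ l, Rm i k j l * E i j * E k l) +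
          (∑ i, ∑ j, ∑ k, Ric j k * E i j * E i k) =
        (1 / ((n : ℝ) - 1)) * (∑ i, ∑ j, (E i j) ^ 2) *
          (R - Real.sqrt ((n : ℝ) * ((n : ℝ) - 1)) *
            Real.sqrt (∑ i, ∑ j, (E i j) ^ 2))) :
    ∃ μ ν : ℝ, μ ≠ ν ∧
      Module.finrank ℝ (Module.End.eigenspace (Matrix.toLin' E) μ) = n - 1 ∧
      Module.finrank ℝ (Module.End.eigenspace (Matrix.toLin' E) ν) = 1 := by
  have hE : E.IsHermitian := by rwa [IsHermitian, conjTranspose_eq_transpose_of_trivial]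
  have htrace : E.trace = 0 := htr
  rw [sum_riemann_contraction E hsymm _ _ g hg Rm hRm,
    sum_ricci_contraction E hsymm _ g hg Ric hRic, htrace, ← IsSymm.trace_pow_two_eq_sum_sq hsymm] at heq
  have hpow (k : ℕ) : ∑ i, hE.eigenvalues i ^ k = (E ^ k).trace := by
    simpa using (hE.trace_pow_eq_sum_eigenvalues_pow k).symm
  have h2 : 0 < ∑ i, hE.eigenvalues i ^ 2 := by
    obtain ⟨i, hi⟩ := Function.ne_iff.mp (hE.eigenvalues_eq_zero_iff.not.mpr hne)
    exact sum_pos' (fun j _ ↦ sq_nonneg _) ⟨i, mem_univ i, sq_pos_of_ne_zero hi⟩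
  have h3 : ∑ i, hE.eigenvalues i ^ 3 = -(((Fintype.card (Fin n) : ℝ) - 2) /
      √(Fintype.card (Fin n) * (Fintype.card (Fin n) - 1))) *
      (∑ i, hE.eigenvalues i ^ 2) * √(∑ i, hE.eigenvalues i ^ 2) := by
    rw [hpow, hpow, Fintype.card_fin]
    exact cube_term_eq_of_equality_case (R := R) (by exact_mod_cast hn) (by linear_combination heq)
  obtain ⟨μ, ν, hμν, hμ, hν⟩ := exists_card_filter_eq_of_sum_pow_three_eq
    (by simp only [Fintype.card_fin]; omega) (by simpa [htrace] using hpow 1) h2 h3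
  rw [hE.card_filter_eigenvalues_eq, Fintype.card_fin] at hμ
  rw [hE.card_filter_eigenvalues_eq] at hν
  exact ⟨μ, ν, hμν, hμ, hν⟩

/-- If a nonzero symmetric trace-free bilinear form `E` (components in an
orthonormal basis of an `n`-dimensional inner product space, `n ≥ 3`, so `g = δ`) with
`R > 0` attains equality in the conformally flat curvature quadratic-form estimate
`-Rm_{ikjl}E_{ij}E_{kl} + Ric_{jk}E_{ij}E_{ik} = (1/(n-1))|E|²(R - √(n(n-1))|E|)`,
then `E` has an eigenvalue of multiplicity `n-1` and another of multiplicity `1`. -/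
theorem equality_case_eigenvalue_structure (n : ℕ) (hn : 3 ≤ n) (R : ℝ) (hR : 0 < R)
    (E : Matrix (Fin n) (Fin n) ℝ) (hsymm : E.IsSymm) (htr : ∑ i, E i i = 0) (hne : E ≠ 0)
    (g : Fin n → Fin n → ℝ) (hg : ∀ i j, g i j = if i = j then 1 else 0)
    (Rm : Fin n → Fin n → Fin n → Fin n → ℝ)
    (hRm : ∀ i k j l, Rm i k j l =
        (1 / ((n : ℝ) - 2)) *
          (E i j * g k l - E i l * g j k + E k l * g i j - E j k * g i l) +
        (R / ((n : ℝ) * ((n : ℝ) - 1))) * (g i j * g k l - g i l * g j k))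
    (Ric : Fin n → Fin n → ℝ)
    (hRic : ∀ j k, Ric j k = E j k + (R / (n : ℝ)) * g j k)
    (heq : -(∑ i, ∑ k, ∑ j, ∑ l, Rm i k j l * E i j * E k l) +
          (∑ i, ∑ j, ∑ k, Ric j k * E i j * E i k) =
        (1 / ((n : ℝ) - 1)) * (∑ i, ∑ j, (E i j) ^ 2) *
          (R - Real.sqrt ((n : ℝ) * ((n : ℝ) - 1)) *
            Real.sqrt (∑ i, ∑ j, (E i j) ^ 2))) :
    ∃ μ ν : ℝ, μ ≠ ν ∧
      Module.finrank ℝ (Module.End.eigenspace (Matrix.toLin' E) μ) = n - 1 ∧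
      Module.finrank ℝ (Module.End.eigenspace (Matrix.toLin' E) ν) = 1 :=
  equality_case_eigenvalue_structure_general n hn R E hsymm htr hne g hg Rm hRm Ric hRic heq
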